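/- arXiv:2207.09364 — 5 statements merged into one kernel-verified Lean document; each statement's English description precedes it below -/
import Mathlib

section
/- Suppose |F(a) − F(b) − ⟨∇F(b), a−b⟩| ≤ D_h(a,b) for all a,b, h is μ-strongly convex, and x^{k+1} = argmin_{y∈X} {τ⟨w, y − x^k⟩ + D_h(y, x^k)} while x̂^{k+1} = argmin_{y∈X} {(τ/2)⟨∇F(x^k), y − x^k⟩ + D_h(y, x^k)} over a closed convex set X. Then F(x^{k+1}) − F(x^k) ≤ (τ/(2μ))‖∇F(x^k) − w‖² + (2 − 1/τ) D_h(x̂^{k+1}, x^k) + (1 − 1/τ) D_h(x^{k+1}, x^k). -/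
open RealInnerProductSpace

/-!
Write `g = ∇F(xᵏ)` and split `⟨g, x⁺ − xᵏ⟩` as
`⟨g − w, x⁺ − x̂⁺⟩ + ⟨w, x⁺ − x̂⁺⟩ + ⟨g, x̂⁺ − xᵏ⟩`. After the upper relative-smoothness bound
`F(x⁺) − F(xᵏ) ≤ ⟨g, x⁺ − xᵏ⟩ + D_h(x⁺, xᵏ)`, the first piece is handled by Young's inequality
together with strong convexity, `(μ/2)‖x⁺ − x̂⁺‖² ≤ D_h(x̂⁺, x⁺)`, the second by the three-point
inequality of `x⁺` tested at `y = x̂⁺`, and the third by that of `x̂⁺` tested at `y = xᵏ`. The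
`D_h(x̂⁺, x⁺)` terms cancel and one is left with the sharper bound in which `D_h(x̂⁺, xᵏ)` enters
with coefficient `−1/τ`.
-/

section Bregman

variable {E : Type*} [NormedAddCommGroup E] [InnerProductSpace ℝ E]

def bregmanDiv (h : E → ℝ) (gradh : E → E) (a b : E) : ℝ :=
  h a - h b - ⟪gradh b, a - b⟫

@[simp]
lemma bregmanDiv_self (h : E → ℝ) (gradh : E → E) (a : E) : bregmanDiv h gradh a a = 0 := by
  simp [bregmanDiv]

lemma bregmanDiv_nonneg {h : E → ℝ} {gradh : E → E} {μ : ℝ} (hμ : 0 ≤ μ)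
    (hstrong : ∀ a b, μ / 2 * ‖a - b‖ ^ 2 ≤ bregmanDiv h gradh a b) (a b : E) :
    0 ≤ bregmanDiv h gradh a b :=
  le_trans (by positivity) (hstrong a b)

lemma real_inner_le_young {μ : ℝ} (hμ : 0 < μ) (a b : E) :
    ⟪a, b⟫ ≤ 1 / (2 * μ) * ‖a‖ ^ 2 + μ / 2 * ‖b‖ ^ 2 := by
  have hnorm : ‖a‖ * ‖b‖ ≤ 1 / (2 * μ) * ‖a‖ ^ 2 + μ / 2 * ‖b‖ ^ 2 := by
    have hsq : 0 ≤ (‖a‖ - μ * ‖b‖) ^ 2 / (2 * μ) := by positivity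
    have hexpand : (‖a‖ - μ * ‖b‖) ^ 2 / (2 * μ)
        = 1 / (2 * μ) * ‖a‖ ^ 2 + μ / 2 * ‖b‖ ^ 2 - ‖a‖ * ‖b‖ := by
      field_simp
      ring
    linarith
  exact (real_inner_le_norm a b).trans hnorm

theorem descent_bound_of_threePoint {F h : E → ℝ} {gradF gradh : E → E} {X : Set E}
    {τ μ : ℝ} (hτ : 0 < τ) (hμ : 0 < μ) {w xk x1 xhat : E} (hxk : xk ∈ X) (hxhat : xhat ∈ X)
    (hsmooth : ∀ a b, |F a - F b - ⟪gradF b, a - b⟫| ≤ bregmanDiv h gradh a b)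
    (hstrong : ∀ a b, μ / 2 * ‖a - b‖ ^ 2 ≤ bregmanDiv h gradh a b)
    (hthree1 : ∀ y ∈ X, τ * ⟪w, x1 - y⟫ ≤
      bregmanDiv h gradh y xk - bregmanDiv h gradh x1 xk - bregmanDiv h gradh y x1)
    (hthree2 : ∀ y ∈ X, τ / 2 * ⟪gradF xk, xhat - y⟫ ≤
      bregmanDiv h gradh y xk - bregmanDiv h gradh xhat xk - bregmanDiv h gradh y xhat) :
    F x1 - F xk ≤ τ / (2 * μ) * ‖gradF xk - w‖ ^ 2
      + (1 - 1 / τ) * bregmanDiv h gradh x1 xk - 1 / τ * bregmanDiv h gradh xhat xk := by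
  set D := bregmanDiv h gradh
  have hF : F x1 - F xk ≤ ⟪gradF xk, x1 - xk⟫ + D x1 xk := by
    linarith [(abs_le.mp (hsmooth x1 xk)).2]
  have hsplit : ⟪gradF xk, x1 - xk⟫
      = ⟪gradF xk - w, x1 - xhat⟫ + ⟪w, x1 - xhat⟫ + ⟪gradF xk, xhat - xk⟫ := by
    simp only [inner_sub_left, inner_sub_right]
    ring
  have hyoung : ⟪gradF xk - w, x1 - xhat⟫
      ≤ τ / (2 * μ) * ‖gradF xk - w‖ ^ 2 + 1 / τ * D xhat x1 := by
    have hstrong' : μ / 2 * ‖x1 - xhat‖ ^ 2 ≤ D xhat x1 := norm_sub_rev x1 xhat ▸ hstrong xhat x1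
    calc ⟪gradF xk - w, x1 - xhat⟫
        ≤ 1 / (2 * (μ / τ)) * ‖gradF xk - w‖ ^ 2 + μ / τ / 2 * ‖x1 - xhat‖ ^ 2 :=
          real_inner_le_young (div_pos hμ hτ) _ _
      _ = τ / (2 * μ) * ‖gradF xk - w‖ ^ 2 + 1 / τ * (μ / 2 * ‖x1 - xhat‖ ^ 2) := by
          field_simp
      _ ≤ τ / (2 * μ) * ‖gradF xk - w‖ ^ 2 + 1 / τ * D xhat x1 := by gcongr
  have hw : ⟪w, x1 - xhat⟫ ≤ (D xhat xk - D x1 xk - D xhat x1) / τ :=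
    (le_div_iff₀' hτ).mpr (hthree1 xhat hxhat)
  have hg : ⟪gradF xk, xhat - xk⟫ ≤ -2 * D xhat xk / τ := by
    have hself : D xk xk = 0 := bregmanDiv_self h gradh xk
    refine (le_div_iff₀' hτ).mpr ?_
    linarith [hthree2 xk hxk, bregmanDiv_nonneg hμ.le hstrong xk xhat]
  rw [hsplit] at hF
  ring_nf at hF hyoung hw hg ⊢
  linarith

end Bregman

theorem sor_descent_bound_general {d : ℕ}
    (F h : EuclideanSpace ℝ (Fin d) → ℝ)
    (gradF gradh : EuclideanSpace ℝ (Fin d) → EuclideanSpace ℝ (Fin d))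
    (X : Set (EuclideanSpace ℝ (Fin d)))
    (τ μ : ℝ) (hτ : 0 < τ) (hμ : 0 < μ)
    (w xk x1 xhat : EuclideanSpace ℝ (Fin d))
    (hxk : xk ∈ X) (hxhat : xhat ∈ X)
    (hsmooth : ∀ a b, |F a - F b - ⟪gradF b, a - b⟫| ≤
      h a - h b - ⟪gradh b, a - b⟫)
    (hstrong : ∀ a b, μ / 2 * ‖a - b‖ ^ 2 ≤ h a - h b - ⟪gradh b, a - b⟫)
    (hthree1 : ∀ y ∈ X, τ * ⟪w, x1 - y⟫ ≤
      (h y - h xk - ⟪gradh xk, y - xk⟫) - (h x1 - h xk - ⟪gradh xk, x1 - xk⟫)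
        - (h y - h x1 - ⟪gradh x1, y - x1⟫))
    (hthree2 : ∀ y ∈ X, τ / 2 * ⟪gradF xk, xhat - y⟫ ≤
      (h y - h xk - ⟪gradh xk, y - xk⟫) - (h xhat - h xk - ⟪gradh xk, xhat - xk⟫)
        - (h y - h xhat - ⟪gradh xhat, y - xhat⟫)) :
    F x1 - F xk ≤ τ / (2 * μ) * ‖gradF xk - w‖ ^ 2
      + (2 - 1 / τ) * (h xhat - h xk - ⟪gradh xk, xhat - xk⟫)
      + (1 - 1 / τ) * (h x1 - h xk - ⟪gradh xk, x1 - xk⟫) := by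
  have hsharp := descent_bound_of_threePoint (gradh := gradh) hτ hμ hxk hxhat
    hsmooth hstrong hthree1 hthree2
  have hD : 0 ≤ bregmanDiv h gradh xhat xk := bregmanDiv_nonneg hμ.le hstrong xhat xk
  unfold bregmanDiv at hsharp hD
  linarith

/-- One-step descent bound for the Bregman proximal step.
With `D_h` the Bregman divergence of a `μ`-strongly convex `h`, a two-sidedly
relatively smooth `F`, and `x⁺` (resp. `x̂⁺`) the Bregman proximal points driven by `w`
(resp. `∇F(x^k)`) over a closed convex set `X` (encoded through the assumed
three-point inequalities), we have
`F(x⁺) − F(x^k) ≤ (τ/(2μ))‖∇F(x^k) − w‖² + (2 − 1/τ) D_h(x̂⁺, x^k) + (1 − 1/τ) D_h(x⁺, x^k)`. -/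
theorem sor_descent_bound {d : ℕ}
    (F h : EuclideanSpace ℝ (Fin d) → ℝ)
    (gradF gradh : EuclideanSpace ℝ (Fin d) → EuclideanSpace ℝ (Fin d))
    (X : Set (EuclideanSpace ℝ (Fin d)))
    (hXclosed : IsClosed X) (hXconvex : Convex ℝ X)
    (τ μ : ℝ) (hτ : 0 < τ) (hτ' : τ < 1 / 2) (hμ : 0 < μ)
    (w xk x1 xhat : EuclideanSpace ℝ (Fin d))
    (hxk : xk ∈ X) (hx1 : x1 ∈ X) (hxhat : xhat ∈ X)
    (hFdiff : ∀ x, HasGradientAt F (gradF x) x)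
    (hhdiff : ∀ x, HasGradientAt h (gradh x) x)
    (hsmooth : ∀ a b, |F a - F b - ⟪gradF b, a - b⟫| ≤
      h a - h b - ⟪gradh b, a - b⟫)
    (hstrong : ∀ a b, μ / 2 * ‖a - b‖ ^ 2 ≤ h a - h b - ⟪gradh b, a - b⟫)
    (hx1min : IsMinOn (fun y => τ * ⟪w, y - xk⟫ + (h y - h xk - ⟪gradh xk, y - xk⟫)) X x1)
    (hxhatmin : IsMinOn (fun y => τ / 2 * ⟪gradF xk, y - xk⟫
      + (h y - h xk - ⟪gradh xk, y - xk⟫)) X xhat)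
    (hthree1 : ∀ y ∈ X, τ * ⟪w, x1 - y⟫ ≤
      (h y - h xk - ⟪gradh xk, y - xk⟫) - (h x1 - h xk - ⟪gradh xk, x1 - xk⟫)
        - (h y - h x1 - ⟪gradh x1, y - x1⟫))
    (hthree2 : ∀ y ∈ X, τ / 2 * ⟪gradF xk, xhat - y⟫ ≤
      (h y - h xk - ⟪gradh xk, y - xk⟫) - (h xhat - h xk - ⟪gradh xk, xhat - xk⟫)
        - (h y - h xhat - ⟪gradh xhat, y - xhat⟫)) :
    F x1 - F xk ≤ τ / (2 * μ) * ‖gradF xk - w‖ ^ 2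
      + (2 - 1 / τ) * (h xhat - h xk - ⟪gradh xk, xhat - xk⟫)
      + (1 - 1 / τ) * (h x1 - h xk - ⟪gradh xk, x1 - xk⟫) :=
  sor_descent_bound_general F h gradF gradh X τ μ hτ hμ w xk x1 xhat hxk hxhat hsmooth hstrong
    hthree1 hthree2
end

section
/- Let A be a symmetric d×d matrix, f(x) = (1/4)(xᵀAx)² and h(x) = (1/4)‖x‖₂⁴. Then for any L ≥ 3‖A‖₂², the functions L·h + f and L·h − f are convex; i.e., f is L-smooth relative to h. -/
open RealInnerProductSpace

/-!
Convexity is checked along lines `z = x + t • v`. For a symmetric `S`, the second derivative of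
`t ↦ ¼ ⟪z, S z⟫²` is `2 ⟪z, S v⟫² + ⟪z, S z⟫ ⟪v, S v⟫`. For `S = id` this is at least
`‖z‖² ‖v‖²`, and for `S = T` Cauchy–Schwarz bounds its absolute value by `3 ‖T‖² ‖z‖² ‖v‖²`,
so `L ≥ 3 ‖T‖²` makes the second derivative of `L h ± f` nonnegative.
-/

theorem convexOn_univ_of_forall_convexOn_line {E : Type*} [AddCommGroup E] [Module ℝ E]
    {g : E → ℝ} (h : ∀ x v : E, ConvexOn ℝ Set.univ fun t : ℝ => g (x + t • v)) :
    ConvexOn ℝ Set.univ g := by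
  refine ⟨convex_univ, fun x _ y _ a b ha hb hab => ?_⟩
  have key := (h x (y - x)).2 (Set.mem_univ 0) (Set.mem_univ 1) ha hb hab
  have hb' : a = 1 - b := by linarith
  subst hb'
  simp only [smul_eq_mul, mul_zero, mul_one, zero_add, zero_smul, one_smul, add_zero,
    add_sub_cancel] at key
  have hxy : x + b • (y - x) = (1 - b) • x + b • y := by module
  simpa only [hxy, smul_eq_mul] using key

theorem convexOn_univ_of_hasDerivAt2_nonneg {f f' f'' : ℝ → ℝ}
    (hf : ∀ t, HasDerivAt f (f' t) t) (hf' : ∀ t, HasDerivAt f' (f'' t) t)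
    (hf'' : ∀ t, 0 ≤ f'' t) : ConvexOn ℝ Set.univ f := by
  exact convexOn_of_hasDerivWithinAt2_nonneg convex_univ
    (fun t _ => (hf t).continuousAt.continuousWithinAt) (fun t _ => (hf t).hasDerivWithinAt)
    (fun t _ => (hf' t).hasDerivWithinAt) (fun t _ => hf'' t)

variable {E : Type*} [NormedAddCommGroup E] [InnerProductSpace ℝ E]

theorem hasDerivAt_const_add_smul (x v : E) (t : ℝ) :
    HasDerivAt (fun s : ℝ => x + s • v) v t := by
  simpa using ((hasDerivAt_id t).smul_const v).const_add x

theorem hasDerivAt_inner_line (x v w : E) (t : ℝ) :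
    HasDerivAt (fun s : ℝ => ⟪x + s • v, w⟫) ⟪v, w⟫ t := by
  simpa using (hasDerivAt_const_add_smul x v t).inner ℝ (hasDerivAt_const t w)

theorem hasDerivAt_inner_map_self_line {S : E →L[ℝ] E} (hS : (S : E →ₗ[ℝ] E).IsSymmetric)
    (x v : E) (t : ℝ) :
    HasDerivAt (fun s : ℝ => ⟪x + s • v, S (x + s • v)⟫) (2 * ⟪x + t • v, S v⟫) t := by
  have hline := hasDerivAt_const_add_smul x v t
  have hSline : HasDerivAt (fun s : ℝ => S (x + s • v)) (S v) t :=
    S.hasFDerivAt.comp_hasDerivAt t hline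
  refine (hline.inner ℝ hSline).congr_deriv ?_
  rw [show ⟪v, S (x + t • v)⟫ = ⟪x + t • v, S v⟫ from (real_inner_comm _ _).trans (hS _ _)]
  ring

theorem hasDerivAt_sq_inner_map_self_line {S : E →L[ℝ] E} (hS : (S : E →ₗ[ℝ] E).IsSymmetric)
    (x v : E) (t : ℝ) :
    HasDerivAt (fun s : ℝ => 1 / 4 * ⟪x + s • v, S (x + s • v)⟫ ^ 2)
      (⟪x + t • v, S (x + t • v)⟫ * ⟪x + t • v, S v⟫) t := by
  refine (((hasDerivAt_inner_map_self_line hS x v t).pow 2).const_mul (1 / 4)).congr_deriv ?_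
  ring

theorem hasDerivAt_inner_map_self_mul_inner_map_line {S : E →L[ℝ] E}
    (hS : (S : E →ₗ[ℝ] E).IsSymmetric) (x v : E) (t : ℝ) :
    HasDerivAt (fun s : ℝ => ⟪x + s • v, S (x + s • v)⟫ * ⟪x + s • v, S v⟫)
      (2 * ⟪x + t • v, S v⟫ ^ 2 + ⟪x + t • v, S (x + t • v)⟫ * ⟪v, S v⟫) t := by
  refine ((hasDerivAt_inner_map_self_line hS x v t).mul
    (hasDerivAt_inner_line x v (S v) t)).congr_deriv ?_
  ring

theorem abs_inner_map_le (T : E →L[ℝ] E) (z v : E) : |⟪z, T v⟫| ≤ ‖T‖ * (‖z‖ * ‖v‖) :=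
  calc |⟪z, T v⟫| ≤ ‖z‖ * ‖T v‖ := abs_real_inner_le_norm z (T v)
    _ ≤ ‖z‖ * (‖T‖ * ‖v‖) := by gcongr; exact T.le_opNorm v
    _ = ‖T‖ * (‖z‖ * ‖v‖) := by ring

theorem abs_two_mul_inner_map_sq_add_le (T : E →L[ℝ] E) (z v : E) :
    |2 * ⟪z, T v⟫ ^ 2 + ⟪z, T z⟫ * ⟪v, T v⟫| ≤ 3 * ‖T‖ ^ 2 * (‖z‖ ^ 2 * ‖v‖ ^ 2) := by
  have hzv := abs_inner_map_le T z v
  have hzz := abs_inner_map_le T z z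
  have hvv := abs_inner_map_le T v v
  calc |2 * ⟪z, T v⟫ ^ 2 + ⟪z, T z⟫ * ⟪v, T v⟫|
      ≤ 2 * |⟪z, T v⟫| ^ 2 + |⟪z, T z⟫| * |⟪v, T v⟫| := by
        refine (abs_add_le _ _).trans_eq ?_
        rw [abs_mul, abs_mul, abs_pow, abs_two]
    _ ≤ 2 * (‖T‖ * (‖z‖ * ‖v‖)) ^ 2 + ‖T‖ * (‖z‖ * ‖z‖) * (‖T‖ * (‖v‖ * ‖v‖)) := by
        gcongr
    _ = 3 * ‖T‖ ^ 2 * (‖z‖ ^ 2 * ‖v‖ ^ 2) := by ring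

theorem convexOn_mul_quartic_norm_add_mul_sq_inner_map {T : E →L[ℝ] E}
    (hT : (T : E →ₗ[ℝ] E).IsSymmetric) {L e : ℝ} (hL : 3 * ‖T‖ ^ 2 ≤ L) (he : |e| ≤ 1) :
    ConvexOn ℝ Set.univ fun x : E => L * (1 / 4 * ‖x‖ ^ 4) + e * (1 / 4 * ⟪x, T x⟫ ^ 2) := by
  refine convexOn_univ_of_forall_convexOn_line fun x v => ?_
  have hI : (ContinuousLinearMap.id ℝ E : E →ₗ[ℝ] E).IsSymmetric := LinearMap.IsSymmetric.id
  have hnorm : ∀ z : E, ‖z‖ ^ 4 = ⟪z, ContinuousLinearMap.id ℝ E z⟫ ^ 2 := fun z => by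
    rw [ContinuousLinearMap.id_apply, real_inner_self_eq_norm_sq]; ring
  simp only [hnorm]
  refine convexOn_univ_of_hasDerivAt2_nonneg
    (fun t => ((hasDerivAt_sq_inner_map_self_line hI x v t).const_mul L).add
      ((hasDerivAt_sq_inner_map_self_line hT x v t).const_mul e))
    (fun t => ((hasDerivAt_inner_map_self_mul_inner_map_line hI x v t).const_mul L).add
      ((hasDerivAt_inner_map_self_mul_inner_map_line hT x v t).const_mul e)) fun t => ?_
  set z := x + t • v
  simp only [ContinuousLinearMap.id_apply, real_inner_self_eq_norm_sq]
  have hL0 : 0 ≤ L := le_trans (by positivity) hL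
  have hnorm_le : ‖z‖ ^ 2 * ‖v‖ ^ 2 ≤ 2 * ⟪z, v⟫ ^ 2 + ‖z‖ ^ 2 * ‖v‖ ^ 2 :=
    le_add_of_nonneg_left (by positivity)
  have hT_le : |e * (2 * ⟪z, T v⟫ ^ 2 + ⟪z, T z⟫ * ⟪v, T v⟫)| ≤ L * (‖z‖ ^ 2 * ‖v‖ ^ 2) := by
    rw [abs_mul]
    calc |e| * |2 * ⟪z, T v⟫ ^ 2 + ⟪z, T z⟫ * ⟪v, T v⟫|
        ≤ 1 * (3 * ‖T‖ ^ 2 * (‖z‖ ^ 2 * ‖v‖ ^ 2)) :=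
          mul_le_mul he (abs_two_mul_inner_map_sq_add_le T z v) (abs_nonneg _) zero_le_one
      _ ≤ L * (‖z‖ ^ 2 * ‖v‖ ^ 2) := by rw [one_mul]; gcongr
  linarith [neg_abs_le (e * (2 * ⟪z, T v⟫ ^ 2 + ⟪z, T z⟫ * ⟪v, T v⟫)),
    mul_le_mul_of_nonneg_left hnorm_le hL0]

/-- The quartic `f(x) = (1/4)(xᵀAx)²` is `L`-smooth relative to
`h(x) = (1/4)‖x‖₂⁴` whenever `L ≥ 3‖A‖₂²`: both `L·h + f` and `L·h − f` are convex. -/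
theorem quartic_relative_smoothness {d : ℕ}
    (A : Matrix (Fin d) (Fin d) ℝ) (hA : A.IsSymm) (L : ℝ)
    (hL : 3 * ‖Matrix.toEuclideanCLM (𝕜 := ℝ) A‖ ^ 2 ≤ L) :
    ConvexOn ℝ Set.univ (fun x : EuclideanSpace ℝ (Fin d) =>
        L * (1 / 4 * ‖x‖ ^ 4) + 1 / 4 * ⟪x, Matrix.toEuclideanCLM (𝕜 := ℝ) A x⟫ ^ 2) ∧
      ConvexOn ℝ Set.univ (fun x : EuclideanSpace ℝ (Fin d) =>
        L * (1 / 4 * ‖x‖ ^ 4) - 1 / 4 * ⟪x, Matrix.toEuclideanCLM (𝕜 := ℝ) A x⟫ ^ 2) := by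
  have hT : (Matrix.toEuclideanCLM (𝕜 := ℝ) A :
      EuclideanSpace ℝ (Fin d) →ₗ[ℝ] EuclideanSpace ℝ (Fin d)).IsSymmetric := by
    rw [Matrix.coe_toEuclideanCLM_eq_toEuclideanLin]
    exact Matrix.isSymmetric_toEuclideanLin_iff.mpr hA
  constructor
  · simpa only [one_mul] using
      convexOn_mul_quartic_norm_add_mul_sq_inner_map hT hL (e := 1) (by norm_num)
  · simpa only [neg_mul, one_mul, ← sub_eq_add_neg] using
      convexOn_mul_quartic_norm_add_mul_sq_inner_map hT hL (e := -1) (by norm_num)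
end

section
/- Let A_ξ be a random symmetric matrix with E[‖A_ξ‖₂²] < ∞ and define g₂(x) = E[(1/4)(xᵀA_ξx)²]. Then for any L ≥ 3E[‖A_ξ‖₂²], g₂ is L-smooth relative to h₂(x) = (1/4)‖x‖₂⁴, i.e., L·h₂ ± g₂ are convex. -/
/-!
Convexity is tested along lines `t ↦ x + t • v` through second derivatives. For the quartic
`¼ ⟪y, T y⟫²` that second derivative is `½ (⟪y, T v⟫ + ⟪v, T y⟫)² + ⟪y, T y⟫ ⟪v, T v⟫`, which is at
most `3 ‖T‖² ‖y‖² ‖v‖²` in absolute value; for `T = id` it is `2 ⟪y, v⟫² + ‖y‖² ‖v‖²`, at least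
`‖y‖² ‖v‖²`. Averaging over the outcomes, `L ≥ 3 E‖T‖²` makes the second derivative of `L h₂`
dominate that of `± g₂`.
-/

open RealInnerProductSpace Set

section LineDeriv

variable {𝕜 : Type*} [NontriviallyNormedField 𝕜] {E : Type*} [AddCommGroup E] [Module 𝕜 E]
  {F : Type*} [NormedAddCommGroup F] [NormedSpace 𝕜 F] {x v : E}

theorem hasDerivAt_add_smul (x v : F) (t : 𝕜) : HasDerivAt (fun s : 𝕜 => x + s • v) v t := by
  simpa using ((hasDerivAt_id t).smul_const v).const_add x

theorem HasLineDerivAt.hasDerivAt_comp_add_smul {f : E → F} {f' : F} {t : 𝕜}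
    (hf : HasLineDerivAt 𝕜 f f' (x + t • v) v) : HasDerivAt (fun s => f (x + s • v)) f' t := by
  have hshift := HasDerivAt.comp_sub_const t t (by rwa [sub_self])
  refine hshift.congr_of_eventuallyEq (Filter.Eventually.of_forall fun s => ?_)
  simp only
  congr 1
  module

end LineDeriv

section Convexity

variable {E : Type*} [AddCommGroup E] [Module ℝ E]

theorem convexOn_univ_of_convexOn_line {β : Type*} [AddCommMonoid β] [PartialOrder β]
    [SMul ℝ β] {f : E → β} (hf : ∀ x v : E, ConvexOn ℝ univ fun t : ℝ => f (x + t • v)) :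
    ConvexOn ℝ univ f := by
  refine ⟨convex_univ, fun x _ y _ a b ha hb hab => ?_⟩
  have hxy := (hf x (y - x)).2 (mem_univ 0) (mem_univ 1) ha hb hab
  have hmid : x + (a • (0 : ℝ) + b • (1 : ℝ)) • (y - x) = a • x + b • y := by
    rw [eq_sub_of_add_eq hab]; module
  simpa only [hmid, zero_smul, add_zero, one_smul, add_sub_cancel] using hxy

theorem convexOn_univ_of_lineDeriv2_nonneg {f : E → ℝ} {f' f'' : E → E → ℝ}
    (hf : ∀ x v, HasLineDerivAt ℝ f (f' x v) x v)
    (hf' : ∀ x v, HasLineDerivAt ℝ (f' · v) (f'' x v) x v)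
    (hf'' : ∀ x v, 0 ≤ f'' x v) : ConvexOn ℝ univ f := by
  refine convexOn_univ_of_convexOn_line fun x v => ?_
  refine convexOn_of_hasDerivWithinAt2_nonneg convex_univ (f' := fun t => f' (x + t • v) v)
    (f'' := fun t => f'' (x + t • v) v) ?_ ?_ ?_ fun t _ => hf'' _ _
  · exact fun t _ => (hf (x + t • v) v).hasDerivAt_comp_add_smul.continuousAt.continuousWithinAt
  · exact fun t _ => (hf (x + t • v) v).hasDerivAt_comp_add_smul.hasDerivWithinAt
  · exact fun t _ => (hf' (x + t • v) v).hasDerivAt_comp_add_smul.hasDerivWithinAt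

def RelativelySmooth (L : ℝ) (g h : E → ℝ) : Prop :=
  ConvexOn ℝ univ (fun x => L * h x + g x) ∧ ConvexOn ℝ univ (fun x => L * h x - g x)

theorem relativelySmooth_of_abs_lineDeriv2_le {g h : E → ℝ} {g' g'' h' h'' : E → E → ℝ} {L : ℝ}
    (hg : ∀ x v, HasLineDerivAt ℝ g (g' x v) x v)
    (hg' : ∀ x v, HasLineDerivAt ℝ (g' · v) (g'' x v) x v)
    (hh : ∀ x v, HasLineDerivAt ℝ h (h' x v) x v)
    (hh' : ∀ x v, HasLineDerivAt ℝ (h' · v) (h'' x v) x v)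
    (hle : ∀ x v, |g'' x v| ≤ L * h'' x v) : RelativelySmooth L g h := by
  constructor
  · exact convexOn_univ_of_lineDeriv2_nonneg (fun x v => ((hh x v).const_mul L).add (hg x v))
      (fun x v => ((hh' x v).const_mul L).add (hg' x v))
      fun x v => by linarith [neg_abs_le (g'' x v), hle x v]
  · exact convexOn_univ_of_lineDeriv2_nonneg (fun x v => ((hh x v).const_mul L).sub (hg x v))
      (fun x v => ((hh' x v).const_mul L).sub (hg' x v))
      fun x v => by linarith [le_abs_self (g'' x v), hle x v]

end Convexity

noncomputable section Quartic

variable {E : Type*} [NormedAddCommGroup E] [InnerProductSpace ℝ E] (T : E →L[ℝ] E) (x v : E)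

def quarticForm : ℝ := 1 / 4 * ⟪x, T x⟫ ^ 2

def quarticFormLineDeriv : ℝ := ⟪x, T x⟫ * (⟪x, T v⟫ + ⟪v, T x⟫) / 2

def quarticFormLineDeriv2 : ℝ := (⟪x, T v⟫ + ⟪v, T x⟫) ^ 2 / 2 + ⟪x, T x⟫ * ⟪v, T v⟫

theorem hasLineDerivAt_inner_apply_self :
    HasLineDerivAt ℝ (fun y => ⟪y, T y⟫) (⟪x, T v⟫ + ⟪v, T x⟫) x v := by
  have hline := hasDerivAt_add_smul x v (0 : ℝ)
  exact (hline.inner ℝ (T.hasFDerivAt.comp_hasDerivAt 0 hline)).congr_deriv (by simp)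

theorem hasLineDerivAt_inner_apply_add_inner_apply :
    HasLineDerivAt ℝ (fun y => ⟪y, T v⟫ + ⟪v, T y⟫) (2 * ⟪v, T v⟫) x v := by
  have hline := hasDerivAt_add_smul x v (0 : ℝ)
  have h := (hline.inner ℝ (hasDerivAt_const 0 (T v))).add
    ((hasDerivAt_const 0 v).inner ℝ (T.hasFDerivAt.comp_hasDerivAt 0 hline))
  exact h.congr_deriv (by
    simp only [zero_smul, add_zero, inner_zero_right, zero_add, Function.comp_apply,
      inner_zero_left]
    ring)

theorem hasLineDerivAt_quarticForm :
    HasLineDerivAt ℝ (quarticForm T) (quarticFormLineDeriv T x v) x v := by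
  have h := ((hasLineDerivAt_inner_apply_self T x v).pow 2).const_mul (1 / 4 : ℝ)
  exact h.congr_deriv (by simp only [zero_smul, add_zero, quarticFormLineDeriv]; ring)

theorem hasLineDerivAt_quarticFormLineDeriv :
    HasLineDerivAt ℝ (quarticFormLineDeriv T · v) (quarticFormLineDeriv2 T x v) x v := by
  have h := HasDerivAt.mul (hasLineDerivAt_inner_apply_self T x v)
    (hasLineDerivAt_inner_apply_add_inner_apply T x v)
  exact (h.div_const 2).congr_deriv
    (by simp only [zero_smul, add_zero, quarticFormLineDeriv2]; ring)

theorem quarticForm_id : quarticForm (ContinuousLinearMap.id ℝ E) = fun y => 1 / 4 * ‖y‖ ^ 4 := by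
  ext y
  simp only [quarticForm, ContinuousLinearMap.id_apply, real_inner_self_eq_norm_sq]; ring

theorem quarticFormLineDeriv2_id :
    quarticFormLineDeriv2 (ContinuousLinearMap.id ℝ E) x v =
      2 * ⟪x, v⟫ ^ 2 + ‖x‖ ^ 2 * ‖v‖ ^ 2 := by
  simp only [quarticFormLineDeriv2, ContinuousLinearMap.id_apply, real_inner_comm x v,
    real_inner_self_eq_norm_sq]
  ring

theorem abs_inner_apply_le (y z : E) : |⟪y, T z⟫| ≤ ‖T‖ * ‖y‖ * ‖z‖ :=
  calc |⟪y, T z⟫| ≤ ‖y‖ * ‖T z‖ := abs_real_inner_le_norm _ _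
    _ ≤ ‖y‖ * (‖T‖ * ‖z‖) := by gcongr; exact T.le_opNorm z
    _ = ‖T‖ * ‖y‖ * ‖z‖ := by ring

theorem abs_quarticFormLineDeriv2_le :
    |quarticFormLineDeriv2 T x v| ≤ 3 * ‖T‖ ^ 2 * (‖x‖ ^ 2 * ‖v‖ ^ 2) := by
  have hpolar : |⟪x, T v⟫ + ⟪v, T x⟫| ≤ 2 * (‖T‖ * ‖x‖ * ‖v‖) := by
    have := abs_add_le ⟪x, T v⟫ ⟪v, T x⟫
    linarith [abs_inner_apply_le T x v, abs_inner_apply_le T v x]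
  have hsq : (⟪x, T v⟫ + ⟪v, T x⟫) ^ 2 ≤ (2 * (‖T‖ * ‖x‖ * ‖v‖)) ^ 2 :=
    sq_le_sq' (abs_le.mp hpolar).1 (abs_le.mp hpolar).2
  have hprod : |⟪x, T x⟫ * ⟪v, T v⟫| ≤ (‖T‖ * ‖x‖ * ‖x‖) * (‖T‖ * ‖v‖ * ‖v‖) := by
    rw [abs_mul]
    exact mul_le_mul (abs_inner_apply_le T x x) (abs_inner_apply_le T v v) (abs_nonneg _)
      (by positivity)
  calc |quarticFormLineDeriv2 T x v|
      ≤ (⟪x, T v⟫ + ⟪v, T x⟫) ^ 2 / 2 + |⟪x, T x⟫ * ⟪v, T v⟫| := by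
        refine (abs_add_le _ _).trans_eq ?_
        rw [abs_of_nonneg (by positivity)]
    _ ≤ 3 * ‖T‖ ^ 2 * (‖x‖ ^ 2 * ‖v‖ ^ 2) := by nlinarith

theorem relativelySmooth_sum_quarticForm {ι : Type*} [Fintype ι] (w : ι → ℝ) (hw : ∀ i, 0 ≤ w i)
    (T : ι → E →L[ℝ] E) {L : ℝ} (hL : 3 * ∑ i, w i * ‖T i‖ ^ 2 ≤ L) :
    RelativelySmooth L (fun y => ∑ i, w i * quarticForm (T i) y) (fun y => 1 / 4 * ‖y‖ ^ 4) := by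
  rw [← quarticForm_id]
  refine relativelySmooth_of_abs_lineDeriv2_le
    (fun x v => HasDerivAt.fun_sum fun i _ =>
      (hasLineDerivAt_quarticForm (T i) x v).const_mul (w i))
    (fun x v => HasDerivAt.fun_sum fun i _ =>
      (hasLineDerivAt_quarticFormLineDeriv (T i) x v).const_mul (w i))
    (hasLineDerivAt_quarticForm _) (hasLineDerivAt_quarticFormLineDeriv _) fun x v => ?_
  have hL0 : 0 ≤ L := le_trans (mul_nonneg zero_le_three
    (Finset.sum_nonneg fun i _ => mul_nonneg (hw i) (sq_nonneg _))) hL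
  rw [quarticFormLineDeriv2_id]
  calc |∑ i, w i * quarticFormLineDeriv2 (T i) x v|
      ≤ ∑ i, w i * (3 * ‖T i‖ ^ 2 * (‖x‖ ^ 2 * ‖v‖ ^ 2)) := by
        refine (Finset.abs_sum_le_sum_abs _ _).trans (Finset.sum_le_sum fun i _ => ?_)
        rw [abs_mul, abs_of_nonneg (hw i)]
        exact mul_le_mul_of_nonneg_left (abs_quarticFormLineDeriv2_le _ _ _) (hw i)
    _ = (3 * ∑ i, w i * ‖T i‖ ^ 2) * (‖x‖ ^ 2 * ‖v‖ ^ 2) := by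
        rw [Finset.mul_sum, Finset.sum_mul]; exact Finset.sum_congr rfl fun i _ => by ring
    _ ≤ L * (2 * ⟪x, v⟫ ^ 2 + ‖x‖ ^ 2 * ‖v‖ ^ 2) := by
        gcongr
        nlinarith [sq_nonneg ⟪x, v⟫]

end Quartic

theorem averaged_quartic_relative_smoothness_general {d : ℕ} {ι : Type*} [Fintype ι]
    (w : ι → ℝ) (hw : ∀ i, 0 ≤ w i)
    (A : ι → Matrix (Fin d) (Fin d) ℝ) (L : ℝ)
    (hL : 3 * ∑ i, w i * ‖Matrix.toEuclideanCLM (𝕜 := ℝ) (A i)‖ ^ 2 ≤ L) :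
    ConvexOn ℝ Set.univ (fun x : EuclideanSpace ℝ (Fin d) =>
        L * (1 / 4 * ‖x‖ ^ 4)
          + ∑ i, w i * (1 / 4 * ⟪x, Matrix.toEuclideanCLM (𝕜 := ℝ) (A i) x⟫ ^ 2)) ∧
      ConvexOn ℝ Set.univ (fun x : EuclideanSpace ℝ (Fin d) =>
        L * (1 / 4 * ‖x‖ ^ 4)
          - ∑ i, w i * (1 / 4 * ⟪x, Matrix.toEuclideanCLM (𝕜 := ℝ) (A i) x⟫ ^ 2)) :=
  relativelySmooth_sum_quarticForm w hw (fun i => Matrix.toEuclideanCLM (𝕜 := ℝ) (A i)) hL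

/-- Relative smoothness of the averaged quartic.
For a random symmetric matrix `A_ξ` with finitely many outcomes (probabilities `w i`),
`g₂(x) = E[(1/4)(xᵀA_ξx)²]` is `L`-smooth relative to `h₂(x) = (1/4)‖x‖₂⁴`
whenever `L ≥ 3E[‖A_ξ‖₂²]`: both `L·h₂ + g₂` and `L·h₂ − g₂` are convex. -/
theorem averaged_quartic_relative_smoothness {d : ℕ} {ι : Type*} [Fintype ι]
    (w : ι → ℝ) (hw : ∀ i, 0 ≤ w i) (hw1 : ∑ i, w i = 1)
    (A : ι → Matrix (Fin d) (Fin d) ℝ) (hA : ∀ i, (A i).IsSymm) (L : ℝ)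
    (hL : 3 * ∑ i, w i * ‖Matrix.toEuclideanCLM (𝕜 := ℝ) (A i)‖ ^ 2 ≤ L) :
    ConvexOn ℝ Set.univ (fun x : EuclideanSpace ℝ (Fin d) =>
        L * (1 / 4 * ‖x‖ ^ 4)
          + ∑ i, w i * (1 / 4 * ⟪x, Matrix.toEuclideanCLM (𝕜 := ℝ) (A i) x⟫ ^ 2)) ∧
      ConvexOn ℝ Set.univ (fun x : EuclideanSpace ℝ (Fin d) =>
        L * (1 / 4 * ‖x‖ ^ 4)
          - ∑ i, w i * (1 / 4 * ⟪x, Matrix.toEuclideanCLM (𝕜 := ℝ) (A i) x⟫ ^ 2)) :=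
  averaged_quartic_relative_smoothness_general w hw A L hL
end

section
/- Let g(x) = (g₁(x), g₂(x)) with g₁(x) = E[(1/2)xᵀA_ξx] and g₂(x) = E[(1/4)(xᵀA_ξx)²] for a random symmetric matrix A_ξ. If k₁ ≥ ‖E[A_ξ]‖₂ and k₂ ≥ 3E[‖A_ξ‖₂²], then for all x, y: ‖g(x) − g(y) − ∇g(y)ᵀ(x−y)‖₂ ≤ D_h(x,y), where h(x) = (k₁/2)‖x‖₂² + (k₂/4)‖x‖₂⁴. -/
/-!
Bound the Euclidean norm of the pair by the sum of the absolute values of its components. The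
first component is the quadratic form `⟪u, T₀ u⟫ / 2` of the mean operator `T₀` at `u = x - y`,
hence at most `k₁ ‖u‖² / 2 = k₁ D_{‖·‖²/2}(x, y)`. For the second, write `q x = ⟪x, B x⟫` for
one symmetric outcome `B`: the linearization error of `(q / 2)²` is
`((q x - q y) / 2)² + q y · q (x - y) / 2`, and `q x - q y = ⟪x - y, B (x + y)⟫`, so the
parallelogram law bounds it by `3 ‖B‖² D_{‖·‖⁴/4}(x, y)`; averaging over the outcomes keeps
this form. Additivity of Bregman divergences assembles `D_h`.
-/

open RealInnerProductSpace

theorem norm_equiv_symm_pair_le (a b : ℝ) :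
    ‖(EuclideanSpace.equiv (Fin 2) ℝ).symm ![a, b]‖ ≤ |a| + |b| := by
  have hnorm : ‖(EuclideanSpace.equiv (Fin 2) ℝ).symm ![a, b]‖ = √(a ^ 2 + b ^ 2) := by
    simp [EuclideanSpace.norm_eq, Fin.sum_univ_two]
  rw [hnorm, Real.sqrt_le_left (by positivity)]
  nlinarith [sq_abs a, sq_abs b, abs_nonneg a, abs_nonneg b]

section LinearizationError

variable {E : Type*} [NormedAddCommGroup E] [InnerProductSpace ℝ E]

/-- For a convex `f` with gradient `f'` this is the Bregman divergence `D_f(x, y)`. -/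
def linearizationError (f : E → ℝ) (f' : E → E) (x y : E) : ℝ :=
  f x - f y - ⟪f' y, x - y⟫

theorem linearizationError_add_smul (a b : ℝ) (f g : E → ℝ) (f' g' : E → E) (x y : E) :
    linearizationError (fun x => a * f x + b * g x) (fun y => a • f' y + b • g' y) x y =
      a * linearizationError f f' x y + b * linearizationError g g' x y := by
  simp only [linearizationError, inner_add_left, real_inner_smul_left]
  ring

theorem linearizationError_sum {ι : Type*} (s : Finset ι) (w : ι → ℝ) (f : ι → E → ℝ)
    (f' : ι → E → E) (x y : E) :
    linearizationError (fun x => ∑ i ∈ s, w i * f i x) (fun y => ∑ i ∈ s, w i • f' i y) x y =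
      ∑ i ∈ s, w i * linearizationError (f i) (f' i) x y := by
  simp only [linearizationError, sum_inner, real_inner_smul_left, mul_sub,
    Finset.sum_sub_distrib]

theorem abs_linearizationError_sum_le {ι : Type*} (s : Finset ι) {w c : ι → ℝ}
    (hw : ∀ i ∈ s, 0 ≤ w i) {f : ι → E → ℝ} {f' : ι → E → E} {x y : E} {D : ℝ}
    (hf : ∀ i ∈ s, |linearizationError (f i) (f' i) x y| ≤ c i * D) :
    |linearizationError (fun x => ∑ i ∈ s, w i * f i x) (fun y => ∑ i ∈ s, w i • f' i y) x y|
      ≤ (∑ i ∈ s, w i * c i) * D := by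
  rw [linearizationError_sum, Finset.sum_mul]
  refine (Finset.abs_sum_le_sum_abs _ _).trans (Finset.sum_le_sum fun i hi => ?_)
  rw [abs_mul, abs_of_nonneg (hw i hi), mul_assoc]
  exact mul_le_mul_of_nonneg_left (hf i hi) (hw i hi)

theorem linearizationError_sq (f : E → ℝ) (f' : E → E) (x y : E) :
    linearizationError (fun x => f x ^ 2) (fun y => (2 * f y) • f' y) x y =
      (f x - f y) ^ 2 + 2 * f y * linearizationError f f' x y := by
  simp only [linearizationError, real_inner_smul_left]
  ring

theorem two_mul_inner_sub_eq (x y : E) : 2 * ⟪y, x - y⟫ = ‖x‖ ^ 2 - ‖y‖ ^ 2 - ‖x - y‖ ^ 2 := by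
  rw [norm_sub_sq_real, inner_sub_right, real_inner_self_eq_norm_sq, real_inner_comm]
  ring

theorem linearizationError_norm_sq_div_two (x y : E) :
    linearizationError (fun x => ‖x‖ ^ 2 / 2) id x y = ‖x - y‖ ^ 2 / 2 := by
  have := two_mul_inner_sub_eq x y
  simp only [linearizationError, id]
  linarith

theorem linearizationError_norm_pow_four_div_four (x y : E) :
    linearizationError (fun x => ‖x‖ ^ 4 / 4) (fun y => ‖y‖ ^ 2 • y) x y =
      ((‖x‖ ^ 2 - ‖y‖ ^ 2) / 2) ^ 2 + ‖y‖ ^ 2 * ‖x - y‖ ^ 2 / 2 := by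
  have := two_mul_inner_sub_eq x y
  simp only [linearizationError, real_inner_smul_left]
  linear_combination (-‖y‖ ^ 2 / 2) * this

theorem linearizationError_norm_pow_four_div_four_nonneg (x y : E) :
    0 ≤ linearizationError (fun x => ‖x‖ ^ 4 / 4) (fun y => ‖y‖ ^ 2 • y) x y := by
  rw [linearizationError_norm_pow_four_div_four]
  positivity

theorem abs_inner_map_le_s14 (B : E →L[ℝ] E) (x y : E) : |⟪x, B y⟫| ≤ ‖B‖ * ‖x‖ * ‖y‖ :=
  calc |⟪x, B y⟫| ≤ ‖x‖ * ‖B y‖ := abs_real_inner_le_norm _ _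
    _ ≤ ‖x‖ * (‖B‖ * ‖y‖) := by gcongr; exact B.le_opNorm y
    _ = ‖B‖ * ‖x‖ * ‖y‖ := by ring

section SymmetricOperator

variable {B : E →L[ℝ] E} (hB : (B : E →ₗ[ℝ] E).IsSymmetric)
include hB

theorem inner_map_comm (x y : E) : ⟪x, B y⟫ = ⟪y, B x⟫ := by
  rw [real_inner_comm]
  exact hB y x

theorem inner_map_self_sub_inner_map_self (x y : E) :
    ⟪x, B x⟫ - ⟪y, B y⟫ = ⟪x - y, B (x + y)⟫ := by
  rw [map_add, inner_sub_left, inner_add_right, inner_add_right, inner_map_comm hB x y]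
  ring

theorem linearizationError_inner_map_self_div_two (x y : E) :
    linearizationError (fun x => ⟪x, B x⟫ / 2) B x y = ⟪x - y, B (x - y)⟫ / 2 := by
  have h := inner_map_self_sub_inner_map_self hB x y
  rw [map_add, inner_add_right] at h
  change ⟪x, B x⟫ / 2 - ⟪y, B y⟫ / 2 - ⟪B y, x - y⟫ = _
  rw [real_inner_comm (x - y) (B y), map_sub, inner_sub_right]
  linear_combination h / 2

theorem abs_linearizationError_inner_map_self_div_two_le (x y : E) :
    |linearizationError (fun x => ⟪x, B x⟫ / 2) B x y|
      ≤ ‖B‖ * linearizationError (fun x => ‖x‖ ^ 2 / 2) id x y := by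
  rw [linearizationError_inner_map_self_div_two hB, linearizationError_norm_sq_div_two, abs_div,
    abs_two]
  have := abs_inner_map_le_s14 B (x - y) (x - y)
  linarith

theorem abs_linearizationError_inner_map_self_sq_div_four_le (x y : E) :
    |linearizationError (fun x => (⟪x, B x⟫ / 2) ^ 2) (fun y => ⟪y, B y⟫ • B y) x y|
      ≤ 3 * ‖B‖ ^ 2 * linearizationError (fun x => ‖x‖ ^ 4 / 4) (fun y => ‖y‖ ^ 2 • y) x y := by
  have hgrad : (fun y => ⟪y, B y⟫ • B y) = fun y => (2 * (⟪y, B y⟫ / 2)) • B y := by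
    funext y
    rw [mul_div_cancel₀ _ two_ne_zero]
  rw [hgrad, linearizationError_sq, linearizationError_inner_map_self_div_two hB,
    linearizationError_norm_pow_four_div_four]
  have hdiff : (⟪x, B x⟫ - ⟪y, B y⟫) ^ 2
      ≤ ‖B‖ ^ 2 * ‖x - y‖ ^ 2 * (2 * (‖x‖ ^ 2 + ‖y‖ ^ 2) - ‖x - y‖ ^ 2) := by
    rw [← parallelogram_law_with_norm ℝ x y, add_sub_cancel_right,
      inner_map_self_sub_inner_map_self hB, ← sq_abs, ← mul_pow, ← mul_pow]
    exact pow_le_pow_left₀ (abs_nonneg _) (abs_inner_map_le_s14 B _ _) 2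
  have hprod : |⟪y, B y⟫ * ⟪x - y, B (x - y)⟫| ≤ ‖B‖ ^ 2 * ‖y‖ ^ 2 * ‖x - y‖ ^ 2 := by
    rw [abs_mul]
    calc |⟪y, B y⟫| * |⟪x - y, B (x - y)⟫|
        ≤ (‖B‖ * ‖y‖ * ‖y‖) * (‖B‖ * ‖x - y‖ * ‖x - y‖) :=
          mul_le_mul (abs_inner_map_le_s14 B _ _) (abs_inner_map_le_s14 B _ _) (abs_nonneg _)
            (by positivity)
      _ = ‖B‖ ^ 2 * ‖y‖ ^ 2 * ‖x - y‖ ^ 2 := by ring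
  have hcross := abs_le.mp hprod
  -- `3 D_{‖·‖⁴/4}(x, y)` exceeds the bound collected so far by `‖B‖²/4` times this square sum
  have hslack : 0 ≤ ‖B‖ ^ 2 * (2 * (‖x‖ ^ 2 - ‖y‖ ^ 2) ^ 2
      + (‖x‖ ^ 2 - ‖y‖ ^ 2 - ‖x - y‖ ^ 2) ^ 2) := by positivity
  rw [abs_le]
  constructor <;> linarith [sq_nonneg (⟪x, B x⟫ - ⟪y, B y⟫)]

end SymmetricOperator

theorem norm_pair_linearizationError_le {ι : Type*} (s : Finset ι) {w : ι → ℝ}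
    (hw : ∀ i ∈ s, 0 ≤ w i) {T : ι → E →L[ℝ] E} (hT : ∀ i ∈ s, (T i : E →ₗ[ℝ] E).IsSymmetric)
    {k₁ k₂ : ℝ} (hk₁ : ‖∑ i ∈ s, w i • T i‖ ≤ k₁) (hk₂ : 3 * ∑ i ∈ s, w i * ‖T i‖ ^ 2 ≤ k₂)
    (x y : E) :
    ‖(EuclideanSpace.equiv (Fin 2) ℝ).symm
        ![linearizationError (fun x => ∑ i ∈ s, w i * (1 / 2 * ⟪x, T i x⟫))
            ⇑(∑ i ∈ s, w i • T i) x y,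
          linearizationError (fun x => ∑ i ∈ s, w i * (1 / 4 * ⟪x, T i x⟫ ^ 2))
            (fun y => ∑ i ∈ s, (w i * ⟪y, T i y⟫) • T i y) x y]‖
      ≤ linearizationError (fun x => k₁ / 2 * ‖x‖ ^ 2 + k₂ / 4 * ‖x‖ ^ 4)
          (fun y => (k₁ + k₂ * ‖y‖ ^ 2) • y) x y := by
  set T₀ := ∑ i ∈ s, w i • T i
  have hT₀ : (T₀ : E →ₗ[ℝ] E).IsSymmetric := by
    simp only [T₀, ContinuousLinearMap.toLinearMap_sum, ContinuousLinearMap.toLinearMap_smul]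
    exact LinearMap.isSymmetric_sum s fun i hi => (hT i hi).smul (conj_trivial _)
  have hg₁ : (fun x => ∑ i ∈ s, w i * (1 / 2 * ⟪x, T i x⟫)) = fun x => ⟪x, T₀ x⟫ / 2 := by
    funext x
    simp only [T₀, _root_.sum_apply, _root_.smul_apply, inner_sum, real_inner_smul_right,
      Finset.sum_div]
    exact Finset.sum_congr rfl fun i _ => by ring
  have hg₂ : (fun x => ∑ i ∈ s, w i * (1 / 4 * ⟪x, T i x⟫ ^ 2))
      = fun x => ∑ i ∈ s, w i * (⟪x, T i x⟫ / 2) ^ 2 := by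
    funext x
    exact Finset.sum_congr rfl fun i _ => by ring
  have hh : (fun x : E => k₁ / 2 * ‖x‖ ^ 2 + k₂ / 4 * ‖x‖ ^ 4)
      = fun x => k₁ * (‖x‖ ^ 2 / 2) + k₂ * (‖x‖ ^ 4 / 4) := by
    funext x
    ring
  have hh' : (fun y : E => (k₁ + k₂ * ‖y‖ ^ 2) • y) = fun y => k₁ • id y + k₂ • ‖y‖ ^ 2 • y := by
    funext y
    rw [add_smul, mul_smul, id]
  simp only [mul_smul]
  rw [hg₁, hg₂, hh, hh', linearizationError_add_smul]
  refine (norm_equiv_symm_pair_le _ _).trans (add_le_add ?_ ?_)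
  · refine (abs_linearizationError_inner_map_self_div_two_le hT₀ x y).trans ?_
    rw [linearizationError_norm_sq_div_two]
    exact mul_le_mul_of_nonneg_right hk₁ (by positivity)
  · refine (abs_linearizationError_sum_le s hw fun i hi =>
      abs_linearizationError_inner_map_self_sq_div_four_le (hT i hi) x y).trans ?_
    refine mul_le_mul_of_nonneg_right ?_ (linearizationError_norm_pow_four_div_four_nonneg x y)
    simpa only [Finset.mul_sum, mul_left_comm] using hk₂

end LinearizationError

theorem Matrix.IsSymm.isSymmetric_toEuclideanCLM {n : Type*} [Fintype n] [DecidableEq n]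
    {M : Matrix n n ℝ} (hM : M.IsSymm) :
    (Matrix.toEuclideanCLM (𝕜 := ℝ) M :
      EuclideanSpace ℝ n →ₗ[ℝ] EuclideanSpace ℝ n).IsSymmetric := by
  rwa [Matrix.coe_toEuclideanCLM_eq_toEuclideanLin, Matrix.isSymmetric_toEuclideanLin_iff,
    Matrix.isHermitian_iff_isSymm]

theorem pair_map_relative_bound_general {d : ℕ} {ι : Type*} [Fintype ι]
    (w : ι → ℝ) (hw : ∀ i, 0 ≤ w i)
    (A : ι → Matrix (Fin d) (Fin d) ℝ) (hA : ∀ i, (A i).IsSymm) (k₁ k₂ : ℝ)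
    (hk₁ : ‖Matrix.toEuclideanCLM (𝕜 := ℝ) (∑ i, w i • A i)‖ ≤ k₁)
    (hk₂ : 3 * ∑ i, w i * ‖Matrix.toEuclideanCLM (𝕜 := ℝ) (A i)‖ ^ 2 ≤ k₂) :
    ∀ x y : EuclideanSpace ℝ (Fin d),
      ‖(EuclideanSpace.equiv (Fin 2) ℝ).symm
          ![(∑ i, w i * (1 / 2 * ⟪x, Matrix.toEuclideanCLM (𝕜 := ℝ) (A i) x⟫))
              - (∑ i, w i * (1 / 2 * ⟪y, Matrix.toEuclideanCLM (𝕜 := ℝ) (A i) y⟫))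
              - ⟪Matrix.toEuclideanCLM (𝕜 := ℝ) (∑ i, w i • A i) y, x - y⟫,
            (∑ i, w i * (1 / 4 * ⟪x, Matrix.toEuclideanCLM (𝕜 := ℝ) (A i) x⟫ ^ 2))
              - (∑ i, w i * (1 / 4 * ⟪y, Matrix.toEuclideanCLM (𝕜 := ℝ) (A i) y⟫ ^ 2))
              - ⟪∑ i, (w i * ⟪y, Matrix.toEuclideanCLM (𝕜 := ℝ) (A i) y⟫) •
                  Matrix.toEuclideanCLM (𝕜 := ℝ) (A i) y, x - y⟫]‖ ≤
        (k₁ / 2 * ‖x‖ ^ 2 + k₂ / 4 * ‖x‖ ^ 4)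
          - (k₁ / 2 * ‖y‖ ^ 2 + k₂ / 4 * ‖y‖ ^ 4)
          - ⟪(k₁ + k₂ * ‖y‖ ^ 2) • y, x - y⟫ := by
  have hmean : Matrix.toEuclideanCLM (𝕜 := ℝ) (∑ i, w i • A i)
      = ∑ i, w i • Matrix.toEuclideanCLM (𝕜 := ℝ) (A i) := by
    simp only [map_sum, map_smul]
  rw [hmean] at hk₁ ⊢
  exact norm_pair_linearizationError_le Finset.univ (fun i _ => hw i)
    (fun i _ => (hA i).isSymmetric_toEuclideanCLM) hk₁ hk₂

/-- Relative-smoothness-type bound for the pair map `g = (g₁, g₂)`.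
With `g₁(x) = E[(1/2)xᵀA_ξx]`, `g₂(x) = E[(1/4)(xᵀA_ξx)²]` for a random symmetric matrix
`A_ξ` (finitely many outcomes with probabilities `w i`), `k₁ ≥ ‖E[A_ξ]‖₂`,
`k₂ ≥ 3E[‖A_ξ‖₂²]`, the error of linearization of `g` is bounded by the Bregman
divergence of `h(x) = (k₁/2)‖x‖₂² + (k₂/4)‖x‖₂⁴` (whose gradient is
`∇h(y) = (k₁ + k₂‖y‖²)y`). -/
theorem pair_map_relative_bound {d : ℕ} {ι : Type*} [Fintype ι]
    (w : ι → ℝ) (hw : ∀ i, 0 ≤ w i) (hw1 : ∑ i, w i = 1)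
    (A : ι → Matrix (Fin d) (Fin d) ℝ) (hA : ∀ i, (A i).IsSymm) (k₁ k₂ : ℝ)
    (hk₁ : ‖Matrix.toEuclideanCLM (𝕜 := ℝ) (∑ i, w i • A i)‖ ≤ k₁)
    (hk₂ : 3 * ∑ i, w i * ‖Matrix.toEuclideanCLM (𝕜 := ℝ) (A i)‖ ^ 2 ≤ k₂) :
    ∀ x y : EuclideanSpace ℝ (Fin d),
      ‖(EuclideanSpace.equiv (Fin 2) ℝ).symm
          ![(∑ i, w i * (1 / 2 * ⟪x, Matrix.toEuclideanCLM (𝕜 := ℝ) (A i) x⟫))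
              - (∑ i, w i * (1 / 2 * ⟪y, Matrix.toEuclideanCLM (𝕜 := ℝ) (A i) y⟫))
              - ⟪Matrix.toEuclideanCLM (𝕜 := ℝ) (∑ i, w i • A i) y, x - y⟫,
            (∑ i, w i * (1 / 4 * ⟪x, Matrix.toEuclideanCLM (𝕜 := ℝ) (A i) x⟫ ^ 2))
              - (∑ i, w i * (1 / 4 * ⟪y, Matrix.toEuclideanCLM (𝕜 := ℝ) (A i) y⟫ ^ 2))
              - ⟪∑ i, (w i * ⟪y, Matrix.toEuclideanCLM (𝕜 := ℝ) (A i) y⟫) •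
                  Matrix.toEuclideanCLM (𝕜 := ℝ) (A i) y, x - y⟫]‖ ≤
        (k₁ / 2 * ‖x‖ ^ 2 + k₂ / 4 * ‖x‖ ^ 4)
          - (k₁ / 2 * ‖y‖ ^ 2 + k₂ / 4 * ‖y‖ ^ 4)
          - ⟪(k₁ + k₂ * ‖y‖ ^ 2) • y, x - y⟫ :=
  pair_map_relative_bound_general w hw A hA k₁ k₂ hk₁ hk₂
end

section
/- Suppose f is C_f-Lipschitz, g is C_g-Lipschitz, g satisfies ‖g(x)−g(y)−∇g(y)ᵀ(x−y)‖ ≤ L_g D_{h_g}(x,y) with h_g 1-strongly convex, f is L_f-smooth relative to h_f, and x⁺ minimizes y ↦ ⟨vs, y−x⟩ + (L_f/τ) D_{h_f}(u+vᵀ(y−x), u) + (λ/τ) D_{h_g}(y,x) over a closed convex set X containing x, with τ ≤ 1 and λ = C_f L_g + 2 C_{h_f} L_g L_f. Then f(g(x⁺)) ≤ f(g(x)) + 2C_f‖g(x)−u‖ + (C_f²/2)‖∇g(x)−v‖² + (1/2)‖v‖²‖∇f(u)−s‖² − (λ/τ − C_f L_g − 2) D_{h_g}(x⁺, x). -/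
open RealInnerProductSpace

set_option maxHeartbeats 1600000 in
/-- RoR one-step descent lemma.
Under Lipschitzness of `f` and `g`, relative smoothness of `f` w.r.t. `h_f` and of `g`
w.r.t. the `1`-strongly convex `h_g`, if `x⁺` is the Bregman proximal point of the
model built from estimators `u, v, s`, `τ ≤ 1` and `λ = C_f L_g + 2 C_{h_f} L_g L_f`, then
`f(g(x⁺)) ≤ f(g(x)) + 2C_f‖g(x)−u‖ + (C_f²/2)‖∇g(x)−v‖² + (1/2)‖v‖²‖∇f(u)−s‖²
  − (λ/τ − C_f L_g − 2) D_{h_g}(x⁺, x)`. -/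
theorem ror_one_step_descent {d p : ℕ}
    (f hf : EuclideanSpace ℝ (Fin p) → ℝ)
    (gradf gradhf : EuclideanSpace ℝ (Fin p) → EuclideanSpace ℝ (Fin p))
    (g : EuclideanSpace ℝ (Fin d) → EuclideanSpace ℝ (Fin p))
    (Dg : EuclideanSpace ℝ (Fin d) → (EuclideanSpace ℝ (Fin d) →L[ℝ] EuclideanSpace ℝ (Fin p)))
    (hg : EuclideanSpace ℝ (Fin d) → ℝ)
    (gradhg : EuclideanSpace ℝ (Fin d) → EuclideanSpace ℝ (Fin d))
    (X : Set (EuclideanSpace ℝ (Fin d)))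
    (hXclosed : IsClosed X) (hXconvex : Convex ℝ X)
    (Lf Cf Chf Cg Lg τ lam : ℝ)
    (hτ : 0 < τ) (hτ1 : τ ≤ 1)
    (hlam : lam = Cf * Lg + 2 * Chf * Lg * Lf)
    (hfdiff : ∀ a, HasGradientAt f (gradf a) a)
    (hhfdiff : ∀ a, HasGradientAt hf (gradhf a) a)
    (hgdiff : ∀ x, HasFDerivAt g (Dg x) x)
    (hhgdiff : ∀ x, HasGradientAt hg (gradhg x) x)
    (hflip : ∀ a, ‖gradf a‖ ≤ Cf)
    (hhflip : ∀ a, ‖gradhf a‖ ≤ Chf)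
    (hglip : ∀ x, ‖Dg x‖ ≤ Cg)
    (hfsmooth : ∀ a b, |f a - f b - ⟪gradf b, a - b⟫| ≤
      Lf * (hf a - hf b - ⟪gradhf b, a - b⟫))
    (hgrel : ∀ a b, ‖g a - g b - Dg b (a - b)‖ ≤ Lg * (hg a - hg b - ⟪gradhg b, a - b⟫))
    (hhgstrong : ∀ a b, 1 / 2 * ‖a - b‖ ^ 2 ≤ hg a - hg b - ⟪gradhg b, a - b⟫)
    (x xp : EuclideanSpace ℝ (Fin d)) (hx : x ∈ X) (hxp : xp ∈ X)
    (u s : EuclideanSpace ℝ (Fin p))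
    (v : EuclideanSpace ℝ (Fin d) →L[ℝ] EuclideanSpace ℝ (Fin p))
    (hmin : IsMinOn (fun y => ⟪s, v (y - x)⟫
      + Lf / τ * (hf (u + v (y - x)) - hf u - ⟪gradhf u, v (y - x)⟫)
      + lam / τ * (hg y - hg x - ⟪gradhg x, y - x⟫)) X xp) :
    f (g xp) ≤ f (g x) + 2 * Cf * ‖g x - u‖ + Cf ^ 2 / 2 * ‖Dg x - v‖ ^ 2
      + 1 / 2 * ‖v‖ ^ 2 * ‖gradf u - s‖ ^ 2
      - (lam / τ - Cf * Lg - 2) * (hg xp - hg x - ⟪gradhg x, xp - x⟫) := by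

  have hCf : 0 ≤ Cf := le_trans (norm_nonneg _) (hflip 0)
  -- f is Cf-Lipschitz
  have flip : ∀ a b : EuclideanSpace ℝ (Fin p), |f a - f b| ≤ Cf * ‖a - b‖ := by
    intro a b
    have := Convex.norm_image_sub_le_of_norm_hasFDerivWithin_le
      (f := f) (f' := fun z => (InnerProductSpace.toDual ℝ _) (gradf z)) (s := Set.univ)
      (fun z _ => ((hfdiff z).hasFDerivAt).hasFDerivWithinAt)
      (fun z _ => by simpa using hflip z)
      convex_univ (Set.mem_univ b) (Set.mem_univ a)
    simpa [Real.norm_eq_abs] using this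
  set Δ := xp - x with hΔdef
  set D : ℝ := hg xp - hg x - ⟪gradhg x, xp - x⟫ with hDdef
  set Bf : ℝ := hf (u + v Δ) - hf u - ⟪gradhf u, v Δ⟫ with hBfdef
  have hD : 1 / 2 * ‖Δ‖ ^ 2 ≤ D := hhgstrong xp x
  have hDnonneg : 0 ≤ D := le_trans (by positivity) hD
  have hBf : 0 ≤ Lf * Bf := le_trans (abs_nonneg _) (hfsmooth (u + v Δ) u |>.trans_eq (by
    rw [hBfdef]; ring_nf; rw [add_sub_cancel_left]))
  -- minimality
  have hobj := hmin hx
  simp only [sub_self, map_zero, inner_zero_right, add_zero, mul_zero] at hobj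
  have hobj' : ⟪s, v Δ⟫ + Lf / τ * Bf + lam / τ * D ≤ 0 := by
    simpa [hΔdef, hDdef, hBfdef] using hobj
  have hmono : Lf * Bf ≤ Lf / τ * Bf := by
    have h1 : Lf / τ * Bf = (Lf * Bf) / τ := by ring
    rw [h1, le_div_iff₀ hτ]
    nlinarith [hBf]
  have h4 : ⟪s, v Δ⟫ + Lf * Bf ≤ -(lam / τ) * D := by nlinarith [hobj', hmono]
  -- term 1
  have hA : ‖g xp - (u + v Δ)‖ ≤ Lg * D + ‖Dg x - v‖ * ‖Δ‖ + ‖g x - u‖ := by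
    have hdecomp : g xp - (u + v Δ) =
        (g xp - g x - Dg x Δ) + ((Dg x - v) Δ) + (g x - u) := by
      simp only [ContinuousLinearMap.sub_apply]
      abel
    calc ‖g xp - (u + v Δ)‖ ≤ ‖g xp - g x - Dg x Δ‖ + ‖(Dg x - v) Δ‖ + ‖g x - u‖ := by
          rw [hdecomp]; exact norm_add₃_le
      _ ≤ Lg * D + ‖Dg x - v‖ * ‖Δ‖ + ‖g x - u‖ := by
          gcongr ?_ + ?_ + _
          · exact hgrel xp x
          · exact (Dg x - v).le_opNorm Δ
  have h1 : f (g xp) - f (u + v Δ) ≤ Cf * (Lg * D + ‖Dg x - v‖ * ‖Δ‖ + ‖g x - u‖) := by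
    calc f (g xp) - f (u + v Δ) ≤ Cf * ‖g xp - (u + v Δ)‖ :=
          (le_abs_self _).trans (flip (g xp) (u + v Δ))
      _ ≤ Cf * (Lg * D + ‖Dg x - v‖ * ‖Δ‖ + ‖g x - u‖) := by gcongr
  -- term 2
  have h2 : f (u + v Δ) - f u ≤ ⟪s, v Δ⟫ + ‖gradf u - s‖ * (‖v‖ * ‖Δ‖) + Lf * Bf := by
    have hs1 : f (u + v Δ) - f u - ⟪gradf u, v Δ⟫ ≤ Lf * Bf := by
      have := (le_abs_self _).trans (hfsmooth (u + v Δ) u)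
      calc f (u + v Δ) - f u - ⟪gradf u, v Δ⟫
          = f (u + v Δ) - f u - ⟪gradf u, (u + v Δ) - u⟫ := by rw [add_sub_cancel_left]
        _ ≤ Lf * (hf (u + v Δ) - hf u - ⟪gradhf u, (u + v Δ) - u⟫) := this
        _ = Lf * Bf := by rw [hBfdef, add_sub_cancel_left]
    have hs2 : ⟪gradf u, v Δ⟫ = ⟪s, v Δ⟫ + ⟪gradf u - s, v Δ⟫ := by
      rw [inner_sub_left]; ring
    have hs3 : ⟪gradf u - s, v Δ⟫ ≤ ‖gradf u - s‖ * (‖v‖ * ‖Δ‖) := by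
      calc ⟪gradf u - s, v Δ⟫ ≤ ‖gradf u - s‖ * ‖v Δ‖ := real_inner_le_norm _ _
        _ ≤ ‖gradf u - s‖ * (‖v‖ * ‖Δ‖) := by gcongr; exact v.le_opNorm Δ
    linarith
  -- term 3
  have h3 : f u - f (g x) ≤ Cf * ‖g x - u‖ := by
    have := (le_abs_self _).trans (flip u (g x))
    calc f u - f (g x) ≤ Cf * ‖u - g x‖ := this
      _ = Cf * ‖g x - u‖ := by rw [norm_sub_rev]
  have young1 : Cf * (‖Dg x - v‖ * ‖Δ‖) ≤ Cf ^ 2 / 2 * ‖Dg x - v‖ ^ 2 + D := by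
    nlinarith [sq_nonneg (Cf * ‖Dg x - v‖ - ‖Δ‖), hD]
  have young2 : ‖gradf u - s‖ * (‖v‖ * ‖Δ‖) ≤ 1 / 2 * ‖v‖ ^ 2 * ‖gradf u - s‖ ^ 2 + D := by
    nlinarith [sq_nonneg (‖v‖ * ‖gradf u - s‖ - ‖Δ‖), hD]
  have hexp : Cf * (Lg * D + ‖Dg x - v‖ * ‖Δ‖ + ‖g x - u‖)
      = Cf * Lg * D + Cf * (‖Dg x - v‖ * ‖Δ‖) + Cf * ‖g x - u‖ := by ring
  rw [hexp] at h1
  set IP : ℝ := ⟪s, v Δ⟫ with hIP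
  clear_value Δ D Bf IP
  clear hobj hobj' hmin hmono hA hD
  linarith [h1, h2, h3, h4, young1, young2]
end
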